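/- For independent complex random variables S₁, …, S_K with S_k = A_k·B_k where A_k = Σ_{n=0}^{N_x−1} e^{i n ξ_{φ,k}} and B_k = Σ_{n=0}^{N_y−1} e^{i n ξ_{ϑ,k}} with all ξ's independent centered Gaussians (ξ_{φ,k} of variance σ²_{φ,k} and ξ_{ϑ,k} of variance σ²_{ϑ,k}), and positive reals ζ_k, one has E[|Σ_k ζ_k S_k|²] = Σ_k ζ_k² E[|S_k|²] + 2 Σ_{i<j} ζ_i ζ_j (Σ_{n=0}^{N_x−1} e^{−n²σ²_{φ,i}/2})(Σ_{n=0}^{N_x−1} e^{−n²σ²_{φ,j}/2})(Σ_{n=0}^{N_y−1} e^{−n²σ²_{ϑ,i}/2})(Σ_{n=0}^{N_y−1} e^{−n²σ²_{ϑ,j}/2}). -/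

import Mathlib

open ProbabilityTheory MeasureTheory Finset

section Helpers

open Complex
open scoped NNReal Real ENNReal

private lemma gauss_char9 (σ : ℝ) (hσ : 0 < σ) (t : ℝ) :
    ∫ x : ℝ, Complex.exp (Complex.I * t * x) ∂(gaussianReal 0 ((σ^2).toNNReal))
      = Real.exp (-(t^2 * σ^2)/2) := by
  have hv : ((σ^2).toNNReal : ℝ≥0) ≠ 0 := by
    simp [Real.toNNReal_eq_zero, not_le, pow_pos hσ, hσ.ne']
  have hvr : (((σ^2).toNNReal : ℝ≥0) : ℝ) = σ^2 := Real.coe_toNNReal _ (sq_nonneg σ)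
  rw [gaussianReal_of_var_ne_zero _ hv, gaussianPDF_def]
  have h1 : ∀ x : ℝ, ENNReal.ofReal (gaussianPDFReal 0 (σ^2).toNNReal x)
      = ((Real.toNNReal (gaussianPDFReal 0 (σ^2).toNNReal x) : ℝ≥0) : ℝ≥0∞) := fun x => rfl
  simp_rw [h1]
  rw [integral_withDensity_eq_integral_smul
    ((measurable_gaussianPDFReal 0 (σ^2).toNNReal).real_toNNReal)]
  have h2 : ∀ x : ℝ, (Real.toNNReal (gaussianPDFReal 0 (σ^2).toNNReal x)) • cexp (I * t * x)
      = ((gaussianPDFReal 0 (σ^2).toNNReal x : ℝ) : ℂ) * cexp (I * t * x) := by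
    intro x
    rw [NNReal.smul_def, Real.coe_toNNReal _ (gaussianPDFReal_nonneg _ _ _), real_smul]
  simp_rw [h2, gaussianPDFReal, hvr]
  set c : ℝ := (Real.sqrt (2*π*σ^2))⁻¹ with hc
  have hσ2 : (0:ℝ) < 2*σ^2 := by positivity
  have hb : (0:ℝ) < ((((2*σ^2)⁻¹ : ℝ) : ℂ)).re := by
    rw [Complex.ofReal_re]; positivity
  have h3 : ∀ x : ℝ, ((c * rexp (-(x-0)^2/(2*σ^2)) : ℝ) : ℂ) * cexp (I*t*x)
      = (c:ℂ) * (cexp (I*(t:ℂ)*x) * cexp (-(((2*σ^2)⁻¹:ℝ):ℂ) * x^2)) := by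
    intro x
    rw [Complex.ofReal_mul, Complex.ofReal_exp,
      show ((-(x-0)^2/(2*σ^2) : ℝ) : ℂ) = -(((2*σ^2)⁻¹:ℝ):ℂ) * (x:ℂ)^2 by push_cast; ring]
    ring
  simp_rw [h3]
  rw [integral_const_mul, fourierIntegral_gaussian hb (t:ℂ)]
  have h4 : ((π:ℂ) / (((2*σ^2)⁻¹:ℝ):ℂ)) = ((2*π*σ^2 : ℝ) : ℂ) := by
    push_cast; field_simp
  have h5 : ((2*π*σ^2 : ℝ) : ℂ) ^ (1/2 : ℂ) = ((Real.sqrt (2*π*σ^2) : ℝ) : ℂ) := by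
    rw [show (1/2 : ℂ) = ((1/2 : ℝ) : ℂ) by norm_num,
      ← Complex.ofReal_cpow (by positivity), ← Real.rpow_natCast,
      Real.sqrt_eq_rpow]
  have h6 : -(t:ℂ)^2 / (4 * (((2*σ^2)⁻¹:ℝ):ℂ)) = ((-(t^2*σ^2)/2 : ℝ) : ℂ) := by
    push_cast; field_simp; ring
  rw [h4, h5, h6, ← Complex.ofReal_exp, ← Complex.ofReal_mul, ← Complex.ofReal_mul]
  congr 1
  rw [hc, ← mul_assoc, inv_mul_cancel₀ (by positivity), one_mul]

private lemma integral_complex_re9 {Ω : Type*} {mΩ : MeasurableSpace Ω} {μ : Measure Ω}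
    {f : Ω → ℂ} (hf : Integrable f μ) :
    (∫ ω, f ω ∂μ).re = ∫ ω, (f ω).re ∂μ :=
  (ContinuousLinearMap.integral_comp_comm Complex.reCLM hf).symm

private lemma integral_complex_im9 {Ω : Type*} {mΩ : MeasurableSpace Ω} {μ : Measure Ω}
    {f : Ω → ℂ} (hf : Integrable f μ) :
    (∫ ω, f ω ∂μ).im = ∫ ω, (f ω).im ∂μ :=
  (ContinuousLinearMap.integral_comp_comm Complex.imCLM hf).symm

private lemma indepFun_integral_mul_complex9 {Ω : Type*} {mΩ : MeasurableSpace Ω}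
    {μ : Measure Ω} {X Y : Ω → ℂ} (h : IndepFun X Y μ)
    (hX : Integrable X μ) (hY : Integrable Y μ) :
    ∫ ω, X ω * Y ω ∂μ = (∫ ω, X ω ∂μ) * ∫ ω, Y ω ∂μ := by
  have hXY : Integrable (fun ω => X ω * Y ω) μ := h.integrable_mul hX hY
  have hrr : IndepFun (fun ω => (X ω).re) (fun ω => (Y ω).re) μ :=
    h.comp Complex.measurable_re Complex.measurable_re
  have hri : IndepFun (fun ω => (X ω).re) (fun ω => (Y ω).im) μ :=
    h.comp Complex.measurable_re Complex.measurable_im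
  have hir : IndepFun (fun ω => (X ω).im) (fun ω => (Y ω).re) μ :=
    h.comp Complex.measurable_im Complex.measurable_re
  have hii : IndepFun (fun ω => (X ω).im) (fun ω => (Y ω).im) μ :=
    h.comp Complex.measurable_im Complex.measurable_im
  have hXre : Integrable (fun ω => (X ω).re) μ := hX.re
  have hXim : Integrable (fun ω => (X ω).im) μ := hX.im
  have hYre : Integrable (fun ω => (Y ω).re) μ := hY.re
  have hYim : Integrable (fun ω => (Y ω).im) μ := hY.im
  have h1 : ∫ ω, (X ω).re * (Y ω).re ∂μ = (∫ ω, (X ω).re ∂μ) * ∫ ω, (Y ω).re ∂μ :=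
    hrr.integral_fun_mul_eq_mul_integral hXre.aestronglyMeasurable hYre.aestronglyMeasurable
  have h2 : ∫ ω, (X ω).re * (Y ω).im ∂μ = (∫ ω, (X ω).re ∂μ) * ∫ ω, (Y ω).im ∂μ :=
    hri.integral_fun_mul_eq_mul_integral hXre.aestronglyMeasurable hYim.aestronglyMeasurable
  have h3 : ∫ ω, (X ω).im * (Y ω).re ∂μ = (∫ ω, (X ω).im ∂μ) * ∫ ω, (Y ω).re ∂μ :=
    hir.integral_fun_mul_eq_mul_integral hXim.aestronglyMeasurable hYre.aestronglyMeasurable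
  have h4 : ∫ ω, (X ω).im * (Y ω).im ∂μ = (∫ ω, (X ω).im ∂μ) * ∫ ω, (Y ω).im ∂μ :=
    hii.integral_fun_mul_eq_mul_integral hXim.aestronglyMeasurable hYim.aestronglyMeasurable
  have i1 : Integrable (fun ω => (X ω).re * (Y ω).re) μ := hrr.integrable_mul hXre hYre
  have i2 : Integrable (fun ω => (X ω).re * (Y ω).im) μ := hri.integrable_mul hXre hYim
  have i3 : Integrable (fun ω => (X ω).im * (Y ω).re) μ := hir.integrable_mul hXim hYre
  have i4 : Integrable (fun ω => (X ω).im * (Y ω).im) μ := hii.integrable_mul hXim hYim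
  apply Complex.ext
  · rw [integral_complex_re9 hXY, Complex.mul_re,
      integral_complex_re9 hX, integral_complex_re9 hY,
      integral_complex_im9 hX, integral_complex_im9 hY]
    simp_rw [Complex.mul_re]
    rw [integral_sub i1 i4, h1, h4]
  · rw [integral_complex_im9 hXY, Complex.mul_im,
      integral_complex_re9 hX, integral_complex_re9 hY,
      integral_complex_im9 hX, integral_complex_im9 hY]
    simp_rw [Complex.mul_im]
    rw [integral_add i2 i3, h2, h3]

private lemma iIndepFun_of_ae_eq9 {Ω : Type*} {mΩ : MeasurableSpace Ω} {μ : Measure Ω}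
    {ι : Type*} {f g : ι → Ω → ℝ}
    (h : iIndepFun f μ)
    (hfg : ∀ i, f i =ᵐ[μ] g i) :
    iIndepFun g μ := by
  rw [iIndepFun_iff_measure_inter_preimage_eq_mul] at h ⊢
  intro S sets hsets
  have hpre : ∀ i, (f i ⁻¹' sets i : Set Ω) =ᵐ[μ] (g i ⁻¹' sets i) := by
    intro i
    filter_upwards [hfg i] with ω hω
    show (f i ω ∈ sets i) = (g i ω ∈ sets i)
    rw [hω]
  have hinter : (⋂ i ∈ S, f i ⁻¹' sets i : Set Ω) =ᵐ[μ] (⋂ i ∈ S, g i ⁻¹' sets i) := by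
    have hall : ∀ᵐ ω ∂μ, ∀ i ∈ S, f i ω = g i ω :=
      (ae_ball_iff S.countable_toSet).2 fun i _ => hfg i
    filter_upwards [hall] with ω hω
    show (ω ∈ ⋂ i ∈ S, f i ⁻¹' sets i) = (ω ∈ ⋂ i ∈ S, g i ⁻¹' sets i)
    simp only [Set.mem_iInter, Set.mem_preimage, eq_iff_iff]
    constructor
    · intro h' i hi; rw [← hω i hi]; exact h' i hi
    · intro h' i hi; rw [hω i hi]; exact h' i hi
  rw [← measure_congr hinter, h S hsets]
  exact Finset.prod_congr rfl fun i _ => measure_congr (hpre i)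

private lemma double_sum_split9 {K : ℕ} (F : Fin K → Fin K → ℝ) :
    ∑ i, ∑ j, F i j
      = (∑ i, F i i) + ∑ i, ∑ j ∈ univ.filter (fun j => i < j), (F i j + F j i) := by
  have h1 : ∀ i : Fin K, ∑ j, F i j
      = F i i + ((∑ j ∈ univ.filter (fun j => j < i), F i j)
        + ∑ j ∈ univ.filter (fun j => i < j), F i j) := by
    intro i
    rw [← Finset.sum_filter_add_sum_filter_not univ (fun j => j < i) (F i)]
    have h2 : univ.filter (fun j => ¬ j < i) = insert i (univ.filter (fun j => i < j)) := by
      ext j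
      simp only [mem_filter, mem_univ, true_and, mem_insert, not_lt]
      rw [le_iff_lt_or_eq]
      tauto
    rw [h2, Finset.sum_insert (by simp)]
    ring
  simp_rw [h1]
  rw [Finset.sum_add_distrib, Finset.sum_add_distrib]
  have h3 : ∑ i, ∑ j ∈ univ.filter (fun j => j < i), F i j
      = ∑ i : Fin K, ∑ j ∈ univ.filter (fun j => i < j), F j i := by
    rw [Finset.sum_comm' (t' := (univ : Finset (Fin K)))
      (s' := fun j => univ.filter (fun i => j < i)) (fun x y => by simp)]
  rw [h3]
  simp_rw [Finset.sum_add_distrib]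
  ring

private lemma measurable_sum_cexp9 (N : ℕ) :
    Measurable (fun x : ℝ => ∑ n ∈ Finset.range N, Complex.exp (Complex.I * n * x)) := by
  apply Finset.measurable_sum
  intro n _
  exact Complex.measurable_exp.comp (Complex.measurable_ofReal.const_mul _)

private lemma norm_cexp_I_nat9 (n : ℕ) (x : ℝ) : ‖Complex.exp (Complex.I * n * x)‖ = 1 := by
  rw [Complex.norm_exp]
  simp [Complex.mul_re]

private lemma norm_sum_cexp_le9 (N : ℕ) (x : ℝ) :
    ‖∑ n ∈ Finset.range N, Complex.exp (Complex.I * n * x)‖ ≤ N :=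
  le_trans (norm_sum_le _ _)
    (by rw [Finset.sum_congr rfl fun n _ => norm_cexp_I_nat9 n x]; simp)

private lemma integral_sum_cexp_gauss9 {Ω : Type*} {mΩ : MeasurableSpace Ω} {μ : Measure Ω}
    [IsProbabilityMeasure μ] (ξ : Ω → ℝ) (hmeas : Measurable ξ) (σ : ℝ) (hσ : 0 < σ)
    (hmap : Measure.map ξ μ = gaussianReal 0 ((σ^2).toNNReal)) (N : ℕ) :
    ∫ ω, (∑ n ∈ Finset.range N, Complex.exp (Complex.I * n * ξ ω)) ∂μ
      = ((∑ n ∈ Finset.range N, Real.exp (-((n:ℝ)^2 * σ^2)/2) : ℝ) : ℂ) := by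
  have hint : ∀ n : ℕ, Integrable (fun ω => Complex.exp (Complex.I * n * ξ ω)) μ := by
    intro n
    refine (integrable_const (1:ℝ)).mono'
      ((Complex.measurable_exp.comp
        ((Complex.measurable_ofReal.comp hmeas).const_mul _)).aestronglyMeasurable) ?_
    filter_upwards with ω
    rw [norm_cexp_I_nat9]
  rw [integral_finset_sum _ (fun n _ => hint n)]
  push_cast
  refine Finset.sum_congr rfl fun n _ => ?_
  have h1 : ∫ ω, Complex.exp (Complex.I * n * ξ ω) ∂μ
      = ∫ x : ℝ, Complex.exp (Complex.I * n * x) ∂(Measure.map ξ μ) := by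
    rw [integral_map hmeas.aemeasurable]
    exact (Complex.measurable_exp.comp
      (Complex.measurable_ofReal.const_mul _)).aestronglyMeasurable
  rw [h1, hmap]
  have h2 := gauss_char9 σ hσ (n : ℝ)
  push_cast at h2
  rw [h2]

end Helpers

/-- For `S_k = A_k B_k` with
`A_k = ∑_{n<Nx} e^{i n ξ_{φ,k}}`, `B_k = ∑_{n<Ny} e^{i n ξ_{ϑ,k}}`,
all `ξ`'s mutually independent centered Gaussians and positive weights `ζ_k`,
`E[|∑_k ζ_k S_k|²] = ∑_k ζ_k² E[|S_k|²]
  + 2 ∑_{i<j} ζ_i ζ_j (∑_n e^{-n²σ²_{φ,i}/2})(∑_n e^{-n²σ²_{φ,j}/2})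
      (∑_n e^{-n²σ²_{ϑ,i}/2})(∑_n e^{-n²σ²_{ϑ,j}/2})`. -/
theorem second_moment_weighted_sum
    {Ω : Type*} [MeasureSpace Ω] (μ : Measure Ω) [IsProbabilityMeasure μ]
    (K Nx Ny : ℕ) (hK : 0 < K) (hNx : 0 < Nx) (hNy : 0 < Ny)
    (ξφ ξϑ : Fin K → Ω → ℝ) (σφ σϑ : Fin K → ℝ) (ζ : Fin K → ℝ)
    (hζ : ∀ k, 0 < ζ k)
    (hσφ : ∀ k, 0 < σφ k) (hσϑ : ∀ k, 0 < σϑ k)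
    (hφ : ∀ k, Measure.map (ξφ k) μ = gaussianReal 0 ((σφ k ^ 2).toNNReal))
    (hϑ : ∀ k, Measure.map (ξϑ k) μ = gaussianReal 0 ((σϑ k ^ 2).toNNReal))
    (hindep : iIndepFun
        (Sum.elim ξφ ξϑ) μ)
    (S : Fin K → Ω → ℂ)
    (hS : ∀ k ω, S k ω =
        (∑ n ∈ Finset.range Nx, Complex.exp (Complex.I * (n : ℂ) * ξφ k ω)) *
        (∑ n ∈ Finset.range Ny, Complex.exp (Complex.I * (n : ℂ) * ξϑ k ω))) :
    ∫ ω, ‖∑ k, (ζ k : ℂ) * S k ω‖ ^ 2 ∂μ =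
      (∑ k, (ζ k) ^ 2 * ∫ ω, ‖S k ω‖ ^ 2 ∂μ) +
      2 * ∑ i : Fin K, ∑ j ∈ Finset.univ.filter (fun j => i < j),
        ζ i * ζ j *
          ((∑ n ∈ Finset.range Nx, Real.exp (-((n : ℝ) ^ 2 * σφ i ^ 2) / 2)) *
           (∑ n ∈ Finset.range Nx, Real.exp (-((n : ℝ) ^ 2 * σφ j ^ 2) / 2)) *
           (∑ n ∈ Finset.range Ny, Real.exp (-((n : ℝ) ^ 2 * σϑ i ^ 2) / 2)) *
           (∑ n ∈ Finset.range Ny, Real.exp (-((n : ℝ) ^ 2 * σϑ j ^ 2) / 2))) := by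
  classical
  -- almost-everywhere measurability
  have haem : ∀ u : Fin K ⊕ Fin K, AEMeasurable (Sum.elim ξφ ξϑ u) μ := by
    rintro (k | k)
    · by_contra hc
      have h0 : Measure.map (ξφ k) μ = 0 := Measure.map_of_not_aemeasurable hc
      rw [hφ k] at h0
      exact (IsProbabilityMeasure.ne_zero (gaussianReal 0 ((σφ k ^ 2).toNNReal))) h0
    · by_contra hc
      have h0 : Measure.map (ξϑ k) μ = 0 := Measure.map_of_not_aemeasurable hc
      rw [hϑ k] at h0
      exact (IsProbabilityMeasure.ne_zero (gaussianReal 0 ((σϑ k ^ 2).toNNReal))) h0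
  obtain ⟨g, hgmeas, hgae⟩ : ∃ g : Fin K ⊕ Fin K → Ω → ℝ,
      (∀ u, Measurable (g u)) ∧ ∀ u, Sum.elim ξφ ξϑ u =ᵐ[μ] g u :=
    ⟨fun u => (haem u).mk _, fun u => (haem u).measurable_mk, fun u => (haem u).ae_eq_mk⟩
  have hindep' : iIndepFun g μ :=
    iIndepFun_of_ae_eq9 hindep hgae
  have hφ' : ∀ k, Measure.map (g (Sum.inl k)) μ = gaussianReal 0 ((σφ k ^ 2).toNNReal) := by
    intro k; rw [← Measure.map_congr (hgae (Sum.inl k))]; exact hφ k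
  have hϑ' : ∀ k, Measure.map (g (Sum.inr k)) μ = gaussianReal 0 ((σϑ k ^ 2).toNNReal) := by
    intro k; rw [← Measure.map_congr (hgae (Sum.inr k))]; exact hϑ k
  set A : Fin K → Ω → ℂ := fun k ω =>
    ∑ n ∈ Finset.range Nx, Complex.exp (Complex.I * n * g (Sum.inl k) ω) with hA
  set B : Fin K → Ω → ℂ := fun k ω =>
    ∑ n ∈ Finset.range Ny, Complex.exp (Complex.I * n * g (Sum.inr k) ω) with hB
  set S' : Fin K → Ω → ℂ := fun k ω => A k ω * B k ω with hS'def
  have hS'ae : ∀ k, S k =ᵐ[μ] S' k := by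
    intro k
    filter_upwards [hgae (Sum.inl k), hgae (Sum.inr k)] with ω h1 h2
    rw [hS k ω, hS'def]
    simp only [hA, hB]
    rw [show ξφ k ω = g (Sum.inl k) ω from h1, show ξϑ k ω = g (Sum.inr k) ω from h2]
  have hmeasA : ∀ k, Measurable (A k) := fun k => (measurable_sum_cexp9 Nx).comp (hgmeas _)
  have hmeasB : ∀ k, Measurable (B k) := fun k => (measurable_sum_cexp9 Ny).comp (hgmeas _)
  have hmeasS' : ∀ k, Measurable (S' k) := fun k => (hmeasA k).mul (hmeasB k)
  have hbound : ∀ k ω, ‖S' k ω‖ ≤ (Nx : ℝ) * Ny := by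
    intro k ω
    rw [show S' k ω = A k ω * B k ω from rfl, norm_mul]
    exact mul_le_mul (norm_sum_cexp_le9 Nx _) (norm_sum_cexp_le9 Ny _)
      (norm_nonneg _) (Nat.cast_nonneg _)
  have hintA : ∀ k, Integrable (A k) μ := fun k =>
    (integrable_const ((Nx:ℝ))).mono' (hmeasA k).aestronglyMeasurable
      (Filter.Eventually.of_forall fun ω => norm_sum_cexp_le9 Nx _)
  have hintB : ∀ k, Integrable (B k) μ := fun k =>
    (integrable_const ((Ny:ℝ))).mono' (hmeasB k).aestronglyMeasurable
      (Filter.Eventually.of_forall fun ω => norm_sum_cexp_le9 Ny _)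
  have hintS' : ∀ k, Integrable (S' k) μ := fun k =>
    (integrable_const ((Nx:ℝ) * Ny)).mono' (hmeasS' k).aestronglyMeasurable
      (Filter.Eventually.of_forall (hbound k))
  have hmeasConj : ∀ k, Measurable (fun ω => (starRingEnd ℂ) (S' k ω)) :=
    fun k => (RCLike.continuous_conj (K := ℂ)).measurable.comp (hmeasS' k)
  have hintConj : ∀ k, Integrable (fun ω => (starRingEnd ℂ) (S' k ω)) μ := by
    intro k
    refine (integrable_const ((Nx:ℝ) * Ny)).mono' (hmeasConj k).aestronglyMeasurable ?_
    filter_upwards with ω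
    rw [RCLike.norm_conj]
    exact hbound k ω
  have hintProd : ∀ i j, Integrable (fun ω => S' i ω * (starRingEnd ℂ) (S' j ω)) μ := by
    intro i j
    refine (integrable_const (((Nx:ℝ) * Ny) * ((Nx:ℝ) * Ny))).mono'
      ((hmeasS' i).mul (hmeasConj j)).aestronglyMeasurable ?_
    filter_upwards with ω
    rw [norm_mul, RCLike.norm_conj]
    exact mul_le_mul (hbound i ω) (hbound j ω) (norm_nonneg _) (by positivity)
  -- expectations
  have hEA : ∀ k, ∫ ω, A k ω ∂μ
      = ((∑ n ∈ Finset.range Nx, Real.exp (-((n:ℝ)^2 * σφ k^2)/2) : ℝ) : ℂ) :=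
    fun k => integral_sum_cexp_gauss9 _ (hgmeas _) _ (hσφ k) (hφ' k) Nx
  have hEB : ∀ k, ∫ ω, B k ω ∂μ
      = ((∑ n ∈ Finset.range Ny, Real.exp (-((n:ℝ)^2 * σϑ k^2)/2) : ℝ) : ℂ) :=
    fun k => integral_sum_cexp_gauss9 _ (hgmeas _) _ (hσϑ k) (hϑ' k) Ny
  have hES : ∀ k, ∫ ω, S' k ω ∂μ
      = (((∑ n ∈ Finset.range Nx, Real.exp (-((n:ℝ)^2 * σφ k^2)/2))
          * (∑ n ∈ Finset.range Ny, Real.exp (-((n:ℝ)^2 * σϑ k^2)/2)) : ℝ) : ℂ) := by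
    intro k
    have hAB : IndepFun (A k) (B k) μ :=
      (hindep'.indepFun (show (Sum.inl k : Fin K ⊕ Fin K) ≠ Sum.inr k by simp)).comp
        (measurable_sum_cexp9 Nx) (measurable_sum_cexp9 Ny)
    rw [show (∫ ω, S' k ω ∂μ) = ∫ ω, A k ω * B k ω ∂μ from rfl,
      indepFun_integral_mul_complex9 hAB (hintA k) (hintB k), hEA k, hEB k,
      ← Complex.ofReal_mul]
  have hcross : ∀ i j, i ≠ j → ∫ ω, S' i ω * (starRingEnd ℂ) (S' j ω) ∂μ
      = ((((∑ n ∈ Finset.range Nx, Real.exp (-((n:ℝ)^2 * σφ i^2)/2))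
          * (∑ n ∈ Finset.range Ny, Real.exp (-((n:ℝ)^2 * σϑ i^2)/2)))
        * ((∑ n ∈ Finset.range Nx, Real.exp (-((n:ℝ)^2 * σφ j^2)/2))
          * (∑ n ∈ Finset.range Ny, Real.exp (-((n:ℝ)^2 * σϑ j^2)/2))) : ℝ) : ℂ) := by
    intro i j hij
    have hpair := hindep'.indepFun_prodMk_prodMk hgmeas
      (Sum.inl i) (Sum.inr i) (Sum.inl j) (Sum.inr j)
      (by simp [hij]) (by simp) (by simp) (by simp [hij])
    have hφm : Measurable (fun p : ℝ × ℝ =>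
        (∑ n ∈ Finset.range Nx, Complex.exp (Complex.I * n * p.1))
        * (∑ n ∈ Finset.range Ny, Complex.exp (Complex.I * n * p.2))) :=
      ((measurable_sum_cexp9 Nx).comp measurable_fst).mul
        ((measurable_sum_cexp9 Ny).comp measurable_snd)
    have hψm : Measurable (fun p : ℝ × ℝ => (starRingEnd ℂ)
        ((∑ n ∈ Finset.range Nx, Complex.exp (Complex.I * n * p.1))
        * (∑ n ∈ Finset.range Ny, Complex.exp (Complex.I * n * p.2)))) :=
      (RCLike.continuous_conj (K := ℂ)).measurable.comp hφm
    have hSS : IndepFun (S' i) (fun ω => (starRingEnd ℂ) (S' j ω)) μ :=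
      hpair.comp hφm hψm
    rw [indepFun_integral_mul_complex9 hSS (hintS' i) (hintConj j),
      hES i, integral_conj, hES j, Complex.conj_ofReal, ← Complex.ofReal_mul]
  -- pointwise expansion
  have hpoint : ∀ ω, ‖∑ k, (ζ k : ℂ) * S' k ω‖ ^ 2
      = (∑ i, ∑ j, ((ζ i * ζ j : ℝ) : ℂ) * (S' i ω * (starRingEnd ℂ) (S' j ω))).re := by
    intro ω
    have h1 : (‖∑ k, (ζ k : ℂ) * S' k ω‖ : ℝ) ^ 2
        = ((∑ k, (ζ k : ℂ) * S' k ω) * (starRingEnd ℂ) (∑ k, (ζ k : ℂ) * S' k ω)).re := by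
      rw [Complex.mul_conj, Complex.ofReal_re, Complex.sq_norm]
    rw [h1]
    congr 1
    rw [map_sum, Finset.sum_mul_sum]
    refine Finset.sum_congr rfl fun i _ => Finset.sum_congr rfl fun j _ => ?_
    rw [map_mul, Complex.conj_ofReal]
    push_cast
    ring
  have hintSum : Integrable (fun ω =>
      ∑ i, ∑ j, ((ζ i * ζ j : ℝ) : ℂ) * (S' i ω * (starRingEnd ℂ) (S' j ω))) μ := by
    apply integrable_finset_sum
    intro i _
    apply integrable_finset_sum
    intro j _
    exact (hintProd i j).const_mul _
  have hmain : ∫ ω, ‖∑ k, (ζ k : ℂ) * S k ω‖ ^ 2 ∂μ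
      = ∑ i, ∑ j, (ζ i * ζ j) * (∫ ω, S' i ω * (starRingEnd ℂ) (S' j ω) ∂μ).re := by
    have e1 : ∫ ω, ‖∑ k, (ζ k : ℂ) * S k ω‖ ^ 2 ∂μ
        = ∫ ω, ‖∑ k, (ζ k : ℂ) * S' k ω‖ ^ 2 ∂μ := by
      apply integral_congr_ae
      have hae : ∀ᵐ ω ∂μ, ∀ k, S k ω = S' k ω := (MeasureTheory.ae_all_iff).2 hS'ae
      filter_upwards [hae] with ω hω
      rw [show (∑ k, (ζ k : ℂ) * S k ω) = ∑ k, (ζ k : ℂ) * S' k ω from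
        Finset.sum_congr rfl fun k _ => by rw [hω k]]
    rw [e1]
    simp only [hpoint]
    rw [← integral_complex_re9 hintSum]
    have e2 : ∫ ω, (∑ i, ∑ j, ((ζ i * ζ j : ℝ) : ℂ)
          * (S' i ω * (starRingEnd ℂ) (S' j ω))) ∂μ
        = ∑ i, ∑ j, ((ζ i * ζ j : ℝ) : ℂ) * ∫ ω, S' i ω * (starRingEnd ℂ) (S' j ω) ∂μ := by
      rw [integral_finset_sum _ (fun i _ =>
        integrable_finset_sum _ (fun j _ => (hintProd i j).const_mul _))]
      refine Finset.sum_congr rfl fun i _ => ?_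
      rw [integral_finset_sum _ (fun j _ => (hintProd i j).const_mul _)]
      refine Finset.sum_congr rfl fun j _ => ?_
      exact integral_const_mul _ _
    rw [e2, Complex.re_sum]
    refine Finset.sum_congr rfl fun i _ => ?_
    rw [Complex.re_sum]
    refine Finset.sum_congr rfl fun j _ => ?_
    rw [Complex.re_ofReal_mul]
  rw [hmain, double_sum_split9
    (fun i j => (ζ i * ζ j) * (∫ ω, S' i ω * (starRingEnd ℂ) (S' j ω) ∂μ).re)]
  congr 1
  · refine Finset.sum_congr rfl fun k _ => ?_
    have hd : ∫ ω, S' k ω * (starRingEnd ℂ) (S' k ω) ∂μ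
        = ((∫ ω, ‖S k ω‖ ^ 2 ∂μ : ℝ) : ℂ) := by
      have hp : ∀ ω, S' k ω * (starRingEnd ℂ) (S' k ω) = ((‖S' k ω‖ ^ 2 : ℝ) : ℂ) := by
        intro ω
        rw [Complex.mul_conj]
        congr 1
        rw [Complex.sq_norm]
      have hintNS : Integrable (fun ω => ‖S' k ω‖ ^ 2) μ := by
        refine (integrable_const (((Nx:ℝ) * Ny) ^ 2)).mono'
          ((hmeasS' k).norm.pow_const 2).aestronglyMeasurable ?_
        filter_upwards with ω
        rw [Real.norm_eq_abs, abs_of_nonneg (by positivity)]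
        exact pow_le_pow_left₀ (norm_nonneg _) (hbound k ω) 2
      simp only [hp]
      rw [show (∫ ω, ((‖S' k ω‖ ^ 2 : ℝ) : ℂ) ∂μ) = ((∫ ω, ‖S' k ω‖ ^ 2 ∂μ : ℝ) : ℂ) from
        ContinuousLinearMap.integral_comp_comm Complex.ofRealCLM hintNS]
      congr 1
      apply integral_congr_ae
      filter_upwards [hS'ae k] with ω hω
      rw [hω]
    rw [hd, Complex.ofReal_re]
    ring
  · rw [Finset.mul_sum]
    refine Finset.sum_congr rfl fun i _ => ?_
    rw [Finset.mul_sum]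
    refine Finset.sum_congr rfl fun j hj => ?_
    have hij : i ≠ j := ne_of_lt (Finset.mem_filter.1 hj).2
    rw [hcross i j hij, hcross j i hij.symm, Complex.ofReal_re, Complex.ofReal_re]
    ring
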